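/- arXiv:1811.11576 — 2 statements merged into one kernel-verified Lean document; each statement's English description precedes it below -/
import Mathlib

section
/- The isoperimetric deficit satisfies 0 ≤ I₋₁ ≤ I₀^{1/2}. -/
open Real MeasureTheory

noncomputable section

/-- Scalar curvature `κ = f″ · ν` of the arc-length parametrized curve
`f = (f₁, f₂)`, where `ν = (−f₂′, f₁′)` is the inward unit normal. -/
def kappa (f₁ f₂ : ℝ → ℝ) (s : ℝ) : ℝ :=
  deriv (deriv f₁) s * (-(deriv f₂ s)) + deriv (deriv f₂) s * deriv f₁ s

/-- The deviation of curvature `κ̃ = κ − 2π/L`. -/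
def kappaDev (L : ℝ) (f₁ f₂ : ℝ → ℝ) (s : ℝ) : ℝ :=
  kappa f₁ f₂ s - 2 * π / L

/-- The scale-invariant quantity `I_ℓ = L^(2ℓ+1) ∫₀^L |κ̃^(ℓ)|² ds`. -/
def Iq (L : ℝ) (f₁ f₂ : ℝ → ℝ) (ℓ : ℕ) : ℝ :=
  L ^ (2 * ℓ + 1) * ∫ s in (0:ℝ)..L, (deriv^[ℓ] (kappaDev L f₁ f₂) s) ^ 2

/-- The signed area `A = −(1/2) ∫₀^L f · ν ds`. -/
def areaA (L : ℝ) (f₁ f₂ : ℝ → ℝ) : ℝ :=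
  -(1/2) * ∫ s in (0:ℝ)..L, (f₁ s * (-(deriv f₂ s)) + f₂ s * deriv f₁ s)

/-- The isoperimetric deficit `I₋₁ = 1 − 4πA/L²`. -/
def Im1 (L : ℝ) (f₁ f₂ : ℝ → ℝ) : ℝ :=
  1 - 4 * π * areaA L f₁ f₂ / L ^ 2

/-- A smooth closed plane curve of length `L > 0`, parametrized by arc length,
with rotation number `1`, i.e. `(1/(2π)) ∫₀^L κ ds = 1`. -/
def IsClosedCurve (L : ℝ) (f₁ f₂ : ℝ → ℝ) : Prop :=
  0 < L ∧ ContDiff ℝ (⊤ : ℕ∞) f₁ ∧ ContDiff ℝ (⊤ : ℕ∞) f₂ ∧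
  Function.Periodic f₁ L ∧ Function.Periodic f₂ L ∧
  (∀ s, (deriv f₁ s) ^ 2 + (deriv f₂ s) ^ 2 = 1) ∧
  (∫ s in (0:ℝ)..L, kappa f₁ f₂ s) = 2 * π

/-!
The lower bound is the isoperimetric inequality, proved as by Hurwitz: after subtracting its mean,
`f₁` satisfies Wirtinger's inequality, which is Parseval's identity plus the fact that
differentiation multiplies the `n`-th Fourier coefficient by `2πin/L`.

For the upper bound, let `P(s) = (f(s) - f(0)) · ν(s)`. Integrating
`((f - f(0)) · f')' = |f'|² + (f - f(0)) · f'' = 1 + κ P` (as `f'' = κ ν`) over a period gives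
`∫ κ P = -L`, and `∫ P = -2A`, so `∫ κ̃ P = -L · I₋₁`. As `|P(s)| ≤ |f(s) - f(0)| ≤ s ≤ L`
on `[0, L]`, Cauchy–Schwarz gives `L² I₋₁² ≤ L³ ∫ κ̃² = L² I₀`.
-/

open Complex

lemma integral_eq_zero_of_hasDerivAt_of_eq {E : Type*} [NormedAddCommGroup E] [NormedSpace ℝ E]
    [CompleteSpace E] {a b : ℝ} {u u' : ℝ → E} (hu : ∀ s, HasDerivAt u (u' s) s)
    (hu' : Continuous u') (hab : u b = u a) : ∫ s in a..b, u' s = 0 := by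
  rw [intervalIntegral.integral_eq_sub_of_hasDerivAt (fun s _ => hu s)
    (hu'.intervalIntegrable a b), hab, sub_self]

lemma sq_integral_mul_le {a b : ℝ} (hab : a ≤ b) {u v : ℝ → ℝ} (hu : Continuous u)
    (hv : Continuous v) :
    (∫ s in a..b, u s * v s) ^ 2 ≤ (∫ s in a..b, u s ^ 2) * ∫ s in a..b, v s ^ 2 := by
  have hquadratic (t : ℝ) : 0 ≤ (∫ s in a..b, u s ^ 2) * (t * t)
      + 2 * (∫ s in a..b, u s * v s) * t + ∫ s in a..b, v s ^ 2 := by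
    have h : 0 ≤ ∫ s in a..b, (t * u s + v s) ^ 2 :=
      intervalIntegral.integral_nonneg hab fun s _ => sq_nonneg _
    have hexpand : (fun s => (t * u s + v s) ^ 2)
        = fun s => t * t * u s ^ 2 + 2 * t * (u s * v s) + v s ^ 2 := by
      ext s; ring
    rw [hexpand, intervalIntegral.integral_add, intervalIntegral.integral_add,
      intervalIntegral.integral_const_mul, intervalIntegral.integral_const_mul] at h
    · linarith
    all_goals exact Continuous.intervalIntegrable (by fun_prop) _ _
  have := discrim_le_zero hquadratic
  rw [discrim] at this
  linarith

lemma Function.Periodic.deriv {𝕜 F : Type*} [NontriviallyNormedField 𝕜] [NormedAddCommGroup F]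
    [NormedSpace 𝕜 F] {f : 𝕜 → F} {c : 𝕜} (h : Function.Periodic f c) :
    Function.Periodic (_root_.deriv f) c := fun x => by
  rw [← deriv_comp_add_const]
  exact congrArg (_root_.deriv · x) (funext h)

lemma norm_fourierCoeffOn_le_of_hasDerivAt {a b : ℝ} (hab : a < b) {g g' : ℝ → ℂ}
    (hg : ∀ s ∈ Set.uIcc a b, HasDerivAt g (g' s) s) (hg' : IntervalIntegrable g' volume a b)
    (hgab : g b = g a) {n : ℤ} (hn : n ≠ 0) :
    2 * π / (b - a) * ‖fourierCoeffOn hab g n‖ ≤ ‖fourierCoeffOn hab g' n‖ := by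
  have hcoeff : (2 * π * n : ℂ) * I * fourierCoeffOn hab g n
      = ((b - a : ℝ) : ℂ) * fourierCoeffOn hab g' n := by
    rw [fourierCoeffOn_of_hasDerivAt hab hn hg hg', hgab, sub_self, mul_zero, zero_sub]
    field_simp
    push_cast
    ring
  have hnorm := congrArg norm hcoeff
  simp only [norm_mul, norm_I, Complex.norm_real, Complex.norm_ofNat, Complex.norm_intCast,
    mul_one, Real.norm_eq_abs, abs_of_pos pi_pos, abs_of_pos (sub_pos.mpr hab)] at hnorm
  have hn1 : (1 : ℝ) ≤ |(n : ℝ)| := by exact_mod_cast Int.one_le_abs hn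
  rw [div_mul_eq_mul_div, div_le_iff₀ (sub_pos.mpr hab), mul_comm _ (b - a), ← hnorm]
  nlinarith [mul_le_mul_of_nonneg_right hn1
    (mul_nonneg two_pi_pos.le (norm_nonneg (fourierCoeffOn hab g n)))]

lemma wirtinger_inequality {L : ℝ} (hL : 0 < L) {g g' : ℝ → ℂ}
    (hg : ∀ s, HasDerivAt g (g' s) s) (hg' : Continuous g') (hgL : g L = g 0)
    (hmean : ∫ s in (0 : ℝ)..L, g s = 0) :
    (2 * π / L) ^ 2 * ∫ s in (0 : ℝ)..L, ‖g s‖ ^ 2 ≤ ∫ s in (0 : ℝ)..L, ‖g' s‖ ^ 2 := by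
  have hgc : Continuous g := continuous_iff_continuousAt.mpr fun s => (hg s).continuousAt
  have memLp {u : ℝ → ℂ} (hu : Continuous u) : MemLp u 2 (volume.restrict (Set.Ioc 0 L)) :=
    (memLp_two_iff_integrable_sq_norm hu.aestronglyMeasurable).mpr (hu.norm.pow 2).integrableOn_Ioc
  have hparseval := hasSum_sq_fourierCoeffOn hL (memLp hgc)
  have hparseval' := hasSum_sq_fourierCoeffOn hL (memLp hg')
  rw [sub_zero, smul_eq_mul] at hparseval hparseval'
  have hcoeff (n : ℤ) :
      (2 * π / L) ^ 2 * ‖fourierCoeffOn hL g n‖ ^ 2 ≤ ‖fourierCoeffOn hL g' n‖ ^ 2 := by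
    rcases eq_or_ne n 0 with rfl | hn
    · have hzero : fourierCoeffOn hL g 0 = 0 := by simp [fourierCoeffOn_eq_integral, hmean]
      rw [hzero, norm_zero, zero_pow two_ne_zero, mul_zero]
      positivity
    · have := norm_fourierCoeffOn_le_of_hasDerivAt hL (fun s _ => hg s)
        (hg'.intervalIntegrable _ _) hgL hn
      rw [sub_zero] at this
      rw [← mul_pow]
      gcongr
  have := hasSum_le hcoeff (hparseval.mul_left _) hparseval'
  rw [mul_left_comm] at this
  exact le_of_mul_le_mul_left this (inv_pos.mpr hL)

lemma wirtinger_inequality_real {L : ℝ} (hL : 0 < L) {x x' : ℝ → ℝ}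
    (hx : ∀ s, HasDerivAt x (x' s) s) (hx' : Continuous x') (hxL : x L = x 0)
    (hmean : ∫ s in (0 : ℝ)..L, x s = 0) :
    (2 * π / L) ^ 2 * ∫ s in (0 : ℝ)..L, x s ^ 2 ≤ ∫ s in (0 : ℝ)..L, x' s ^ 2 := by
  have := wirtinger_inequality hL (g := fun s => (x s : ℂ)) (fun s => (hx s).ofReal_comp)
    (continuous_ofReal.comp hx') (by simp only [hxL])
    (by rw [intervalIntegral.integral_ofReal, hmean, ofReal_zero])
  simpa only [Complex.norm_real, Real.norm_eq_abs, sq_abs] using this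

section PlaneCurve

variable {L : ℝ} {f₁ f₂ : ℝ → ℝ}

lemma areaA_eq_integral_sub_mul_deriv (hf₁ : ContDiff ℝ 1 f₁) (hf₂ : ContDiff ℝ 1 f₂)
    (h₁ : f₁ L = f₁ 0) (h₂ : f₂ L = f₂ 0) (c : ℝ) :
    areaA L f₁ f₂ = ∫ s in (0 : ℝ)..L, (f₁ s - c) * deriv f₂ s := by
  have hd₁ := hf₁.continuous_deriv_one
  have hd₂ := hf₂.continuous_deriv_one
  have hf₁d := hf₁.differentiable one_ne_zero
  have hf₂d := hf₂.differentiable one_ne_zero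
  have hparts := intervalIntegral.integral_mul_deriv_eq_deriv_mul (fun s _ => (hf₂d s).hasDerivAt)
    (fun s _ => (hf₁d s).hasDerivAt) (hd₂.intervalIntegrable 0 L) (hd₁.intervalIntegrable 0 L)
  have hmean := integral_eq_zero_of_hasDerivAt_of_eq (fun s => (hf₂d s).hasDerivAt) hd₂ h₂
  rw [h₁, h₂, sub_self, zero_sub] at hparts
  simp only [areaA, sub_mul, mul_neg]
  rw [intervalIntegral.integral_add, intervalIntegral.integral_neg, intervalIntegral.integral_sub,
    intervalIntegral.integral_const_mul, hmean, hparts]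
  · simp only [mul_comm (deriv f₂ _)]
    ring
  all_goals exact Continuous.intervalIntegrable (by fun_prop) _ _

-- With `x = f₁ - mean` the area is `∫ x f₂'`; integrate `2ω x f₂' ≤ ω² x² + f₂'²` (`ω = 2π/L`)
-- and apply Wirtinger's inequality to `x`.
lemma four_pi_div_mul_areaA_le (hL : 0 < L) (hf₁ : ContDiff ℝ 1 f₁) (hf₂ : ContDiff ℝ 1 f₂)
    (h₁ : f₁ L = f₁ 0) (h₂ : f₂ L = f₂ 0) :
    4 * π / L * areaA L f₁ f₂ ≤ ∫ s in (0 : ℝ)..L, (deriv f₁ s ^ 2 + deriv f₂ s ^ 2) := by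
  have hd₁ := hf₁.continuous_deriv_one
  have hd₂ := hf₂.continuous_deriv_one
  have hf₁c := hf₁.continuous
  set m := (∫ s in (0 : ℝ)..L, f₁ s) / L
  set ω := 2 * π / L
  have hmean : ∫ s in (0 : ℝ)..L, (f₁ s - m) = 0 := by
    rw [intervalIntegral.integral_sub (hf₁c.intervalIntegrable 0 L) intervalIntegrable_const,
      intervalIntegral.integral_const, smul_eq_mul, sub_zero, mul_div_cancel₀ _ hL.ne', sub_self]
  have hwirtinger := wirtinger_inequality_real hL
    (fun s => ((hf₁.differentiable one_ne_zero s).hasDerivAt.sub_const m)) hd₁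
    (by rw [h₁]) hmean
  calc 4 * π / L * areaA L f₁ f₂ = ∫ s in (0 : ℝ)..L, 2 * ω * ((f₁ s - m) * deriv f₂ s) := by
        rw [areaA_eq_integral_sub_mul_deriv hf₁ hf₂ h₁ h₂ m, intervalIntegral.integral_const_mul]
        ring
    _ ≤ ∫ s in (0 : ℝ)..L, (ω ^ 2 * (f₁ s - m) ^ 2 + deriv f₂ s ^ 2) := by
        refine intervalIntegral.integral_mono_on hL.le ?_ ?_ fun s _ => ?_
        · exact Continuous.intervalIntegrable (by fun_prop) _ _
        · exact Continuous.intervalIntegrable (by fun_prop) _ _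
        · nlinarith [sq_nonneg (ω * (f₁ s - m) - deriv f₂ s)]
    _ ≤ ∫ s in (0 : ℝ)..L, (deriv f₁ s ^ 2 + deriv f₂ s ^ 2) := by
        rw [intervalIntegral.integral_add, intervalIntegral.integral_add,
          intervalIntegral.integral_const_mul]
        · linarith
        all_goals exact Continuous.intervalIntegrable (by fun_prop) _ _

lemma Im1_nonneg (hL : 0 < L) (hf₁ : ContDiff ℝ 1 f₁) (hf₂ : ContDiff ℝ 1 f₂)
    (h₁ : f₁ L = f₁ 0) (h₂ : f₂ L = f₂ 0) (hunit : ∀ s, deriv f₁ s ^ 2 + deriv f₂ s ^ 2 = 1) :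
    0 ≤ Im1 L f₁ f₂ := by
  have h := four_pi_div_mul_areaA_le hL hf₁ hf₂ h₁ h₂
  simp only [hunit, intervalIntegral.integral_const, sub_zero, smul_eq_mul, mul_one] at h
  rw [Im1, sub_nonneg, div_le_one (by positivity)]
  rw [div_mul_eq_mul_div, div_le_iff₀ hL] at h
  linarith

lemma deriv_mul_deriv_deriv_add_eq_zero (hf₁ : ContDiff ℝ 2 f₁) (hf₂ : ContDiff ℝ 2 f₂)
    (hunit : ∀ s, deriv f₁ s ^ 2 + deriv f₂ s ^ 2 = 1) (s : ℝ) :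
    deriv f₁ s * deriv (deriv f₁) s + deriv f₂ s * deriv (deriv f₂) s = 0 := by
  have h₁ := (((hf₁.deriv' (n := 1)).differentiable one_ne_zero s).hasDerivAt).pow 2
  have h₂ := (((hf₂.deriv' (n := 1)).differentiable one_ne_zero s).hasDerivAt).pow 2
  have hconst : HasDerivAt (fun t => deriv f₁ t ^ 2 + deriv f₂ t ^ 2) 0 s := by
    simp only [hunit]
    exact hasDerivAt_const s 1
  have := (h₁.add h₂).unique hconst
  norm_num at this
  linarith

/-- The normal component `(f(s) - f(0)) · ν(s)` of the chord from `f(0)` to `f(s)`. -/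
def chordNormal (f₁ f₂ : ℝ → ℝ) (s : ℝ) : ℝ :=
  (f₁ s - f₁ 0) * (-(deriv f₂ s)) + (f₂ s - f₂ 0) * deriv f₁ s

lemma integral_kappa_mul_chordNormal (hf₁ : ContDiff ℝ 2 f₁) (hf₂ : ContDiff ℝ 2 f₂)
    (hp₁ : Function.Periodic f₁ L) (hp₂ : Function.Periodic f₂ L)
    (hunit : ∀ s, deriv f₁ s ^ 2 + deriv f₂ s ^ 2 = 1) :
    ∫ s in (0 : ℝ)..L, kappa f₁ f₂ s * chordNormal f₁ f₂ s = -L := by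
  have hf₁d := hf₁.differentiable two_ne_zero
  have hf₂d := hf₂.differentiable two_ne_zero
  have hd₁d := (hf₁.deriv' (n := 1)).differentiable one_ne_zero
  have hd₂d := (hf₂.deriv' (n := 1)).differentiable one_ne_zero
  have hd₁ := (hf₁.deriv' (n := 1)).continuous
  have hd₂ := (hf₂.deriv' (n := 1)).continuous
  have hdd₁ := (hf₁.deriv' (n := 1)).continuous_deriv_one
  have hdd₂ := (hf₂.deriv' (n := 1)).continuous_deriv_one
  have hderiv (s : ℝ) : HasDerivAt
      (fun t => (f₁ t - f₁ 0) * deriv f₁ t + (f₂ t - f₂ 0) * deriv f₂ t)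
      (1 + kappa f₁ f₂ s * chordNormal f₁ f₂ s) s := by
    refine ((((hf₁d s).hasDerivAt.sub_const (f₁ 0)).mul (hd₁d s).hasDerivAt).add
      (((hf₂d s).hasDerivAt.sub_const (f₂ 0)).mul (hd₂d s).hasDerivAt)).congr_deriv ?_
    unfold kappa chordNormal
    linear_combination (1 - ((f₁ s - f₁ 0) * deriv (deriv f₁) s
        + (f₂ s - f₂ 0) * deriv (deriv f₂) s)) * hunit s
      + ((f₁ s - f₁ 0) * deriv f₁ s + (f₂ s - f₂ 0) * deriv f₂ s)
        * deriv_mul_deriv_deriv_add_eq_zero hf₁ hf₂ hunit s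
  have hκP : Continuous fun s => kappa f₁ f₂ s * chordNormal f₁ f₂ s := by
    unfold kappa chordNormal
    have := hf₁d.continuous
    have := hf₂d.continuous
    fun_prop
  have h : ∫ s in (0 : ℝ)..L, (1 + kappa f₁ f₂ s * chordNormal f₁ f₂ s) = 0 :=
    integral_eq_zero_of_hasDerivAt_of_eq hderiv (continuous_const.add hκP)
      (by simp only [hp₁.eq, hp₂.eq, hp₁.deriv.eq, hp₂.deriv.eq])
  rw [intervalIntegral.integral_add intervalIntegrable_const (hκP.intervalIntegrable _ _)] at h
  simp only [intervalIntegral.integral_const, sub_zero, smul_eq_mul, mul_one] at h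
  linarith

lemma integral_chordNormal (hf₁ : ContDiff ℝ 1 f₁) (hf₂ : ContDiff ℝ 1 f₂)
    (h₁ : f₁ L = f₁ 0) (h₂ : f₂ L = f₂ 0) :
    ∫ s in (0 : ℝ)..L, chordNormal f₁ f₂ s = -2 * areaA L f₁ f₂ := by
  have hd₁ := hf₁.continuous_deriv_one
  have hd₂ := hf₂.continuous_deriv_one
  have hf₁c := hf₁.continuous
  have hf₂c := hf₂.continuous
  have hmean₁ := integral_eq_zero_of_hasDerivAt_of_eq
    (fun s => (hf₁.differentiable one_ne_zero s).hasDerivAt) hd₁ h₁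
  have hmean₂ := integral_eq_zero_of_hasDerivAt_of_eq
    (fun s => (hf₂.differentiable one_ne_zero s).hasDerivAt) hd₂ h₂
  have hsplit : chordNormal f₁ f₂ = fun s => (f₁ s * (-(deriv f₂ s)) + f₂ s * deriv f₁ s)
      + (f₁ 0 * deriv f₂ s - f₂ 0 * deriv f₁ s) := by
    ext s; unfold chordNormal; ring
  rw [hsplit, intervalIntegral.integral_add, intervalIntegral.integral_sub,
    intervalIntegral.integral_const_mul, intervalIntegral.integral_const_mul, hmean₁, hmean₂, areaA]
  · ring
  all_goals exact Continuous.intervalIntegrable (by fun_prop) _ _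

lemma sq_sub_add_sq_sub_le (hf₁ : Differentiable ℝ f₁) (hf₂ : Differentiable ℝ f₂)
    (hunit : ∀ s, deriv f₁ s ^ 2 + deriv f₂ s ^ 2 = 1) (a b : ℝ) :
    (f₁ b - f₁ a) ^ 2 + (f₂ b - f₂ a) ^ 2 ≤ (b - a) ^ 2 := by
  set γ : ℝ → ℂ := fun s => f₁ s + f₂ s * I
  have hγ (s : ℝ) : HasDerivAt γ (deriv f₁ s + deriv f₂ s * I) s :=
    (hf₁ s).hasDerivAt.ofReal_comp.add ((hf₂ s).hasDerivAt.ofReal_comp.mul_const I)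
  have hlip : LipschitzWith 1 γ := by
    refine lipschitzWith_of_nnnorm_deriv_le (fun s => (hγ s).differentiableAt) fun s => ?_
    rw [(hγ s).deriv, ← NNReal.coe_le_coe, coe_nnnorm, norm_add_mul_I, hunit, Real.sqrt_one]
    rfl
  have h := hlip.dist_le_mul b a
  rw [dist_eq_norm, Real.dist_eq, NNReal.coe_one, one_mul,
    show γ b - γ a = ((f₁ b - f₁ a : ℝ) : ℂ) + ((f₂ b - f₂ a : ℝ) : ℂ) * I by push_cast; ring,
    norm_add_mul_I, sqrt_le_left (abs_nonneg _), sq_abs] at h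
  exact h

lemma chordNormal_sq_le (hf₁ : Differentiable ℝ f₁) (hf₂ : Differentiable ℝ f₂)
    (hunit : ∀ s, deriv f₁ s ^ 2 + deriv f₂ s ^ 2 = 1) (s : ℝ) :
    chordNormal f₁ f₂ s ^ 2 ≤ s ^ 2 := by
  have h := sq_sub_add_sq_sub_le hf₁ hf₂ hunit 0 s
  rw [sub_zero] at h
  unfold chordNormal
  nlinarith [hunit s, sq_nonneg ((f₁ s - f₁ 0) * deriv f₁ s + (f₂ s - f₂ 0) * deriv f₂ s)]

lemma integral_kappaDev_mul_chordNormal (hL : 0 < L) (hf₁ : ContDiff ℝ 2 f₁)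
    (hf₂ : ContDiff ℝ 2 f₂) (hp₁ : Function.Periodic f₁ L) (hp₂ : Function.Periodic f₂ L)
    (hunit : ∀ s, deriv f₁ s ^ 2 + deriv f₂ s ^ 2 = 1) :
    ∫ s in (0 : ℝ)..L, kappaDev L f₁ f₂ s * chordNormal f₁ f₂ s = -(L * Im1 L f₁ f₂) := by
  have hf₁d := hf₁.differentiable two_ne_zero
  have hf₂d := hf₂.differentiable two_ne_zero
  have hd₁ := (hf₁.deriv' (n := 1)).continuous
  have hd₂ := (hf₂.deriv' (n := 1)).continuous
  have hdd₁ := (hf₁.deriv' (n := 1)).continuous_deriv_one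
  have hdd₂ := (hf₂.deriv' (n := 1)).continuous_deriv_one
  have hκ : Continuous (kappa f₁ f₂) := by unfold kappa; fun_prop
  have hP : Continuous (chordNormal f₁ f₂) := by
    unfold chordNormal; have := hf₁d.continuous; have := hf₂d.continuous; fun_prop
  simp only [kappaDev, sub_mul]
  rw [intervalIntegral.integral_sub, intervalIntegral.integral_const_mul,
    integral_kappa_mul_chordNormal hf₁ hf₂ hp₁ hp₂ hunit,
    integral_chordNormal (hf₁.of_le one_le_two) (hf₂.of_le one_le_two) hp₁.eq hp₂.eq, Im1]
  · field_simp
    ring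
  all_goals exact Continuous.intervalIntegrable (by fun_prop) _ _

lemma integral_chordNormal_sq_le (hL : 0 < L) (hf₁ : ContDiff ℝ 1 f₁) (hf₂ : ContDiff ℝ 1 f₂)
    (hunit : ∀ s, deriv f₁ s ^ 2 + deriv f₂ s ^ 2 = 1) :
    ∫ s in (0 : ℝ)..L, chordNormal f₁ f₂ s ^ 2 ≤ L ^ 3 := by
  have hf₁d := hf₁.differentiable one_ne_zero
  have hf₂d := hf₂.differentiable one_ne_zero
  have hP : Continuous (chordNormal f₁ f₂) := by
    unfold chordNormal
    have := hf₁.continuous_deriv_one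
    have := hf₂.continuous_deriv_one
    have := hf₁.continuous
    have := hf₂.continuous
    fun_prop
  calc ∫ s in (0 : ℝ)..L, chordNormal f₁ f₂ s ^ 2 ≤ ∫ s in (0 : ℝ)..L, L ^ 2 :=
        intervalIntegral.integral_mono_on hL.le ((hP.pow 2).intervalIntegrable _ _)
          intervalIntegrable_const fun s hs =>
            (chordNormal_sq_le hf₁d hf₂d hunit s).trans (pow_le_pow_left₀ hs.1 hs.2 2)
    _ = L ^ 3 := by simp only [intervalIntegral.integral_const, sub_zero, smul_eq_mul]; ring

lemma Im1_sq_le_Iq_zero (hL : 0 < L) (hf₁ : ContDiff ℝ 2 f₁) (hf₂ : ContDiff ℝ 2 f₂)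
    (hp₁ : Function.Periodic f₁ L) (hp₂ : Function.Periodic f₂ L)
    (hunit : ∀ s, deriv f₁ s ^ 2 + deriv f₂ s ^ 2 = 1) :
    Im1 L f₁ f₂ ^ 2 ≤ Iq L f₁ f₂ 0 := by
  have hf₁c := hf₁.continuous
  have hf₂c := hf₂.continuous
  have hd₁ := (hf₁.deriv' (n := 1)).continuous
  have hd₂ := (hf₂.deriv' (n := 1)).continuous
  have hdd₁ := (hf₁.deriv' (n := 1)).continuous_deriv_one
  have hdd₂ := (hf₂.deriv' (n := 1)).continuous_deriv_one
  have hcs := sq_integral_mul_le hL.le (u := kappaDev L f₁ f₂) (v := chordNormal f₁ f₂)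
    (by unfold kappaDev kappa; fun_prop) (by unfold chordNormal; fun_prop)
  rw [integral_kappaDev_mul_chordNormal hL hf₁ hf₂ hp₁ hp₂ hunit] at hcs
  have hIq : Iq L f₁ f₂ 0 = L * ∫ s in (0 : ℝ)..L, kappaDev L f₁ f₂ s ^ 2 := by
    simp only [Iq, Function.iterate_zero, id, mul_zero, zero_add, pow_one]
  refine le_of_mul_le_mul_left ?_ (pow_pos hL 2)
  calc L ^ 2 * Im1 L f₁ f₂ ^ 2 = (-(L * Im1 L f₁ f₂)) ^ 2 := by ring
    _ ≤ (∫ s in (0 : ℝ)..L, kappaDev L f₁ f₂ s ^ 2) * L ^ 3 :=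
        hcs.trans (mul_le_mul_of_nonneg_left
          (integral_chordNormal_sq_le hL (hf₁.of_le one_le_two) (hf₂.of_le one_le_two) hunit)
          (intervalIntegral.integral_nonneg hL.le fun s _ => sq_nonneg _))
    _ = L ^ 2 * Iq L f₁ f₂ 0 := by rw [hIq]; ring

end PlaneCurve

/-- The isoperimetric deficit satisfies `0 ≤ I₋₁ ≤ I₀^{1/2}`. -/
theorem stmt_2 (L : ℝ) (f₁ f₂ : ℝ → ℝ) (h : IsClosedCurve L f₁ f₂) :
    0 ≤ Im1 L f₁ f₂ ∧ Im1 L f₁ f₂ ≤ Real.sqrt (Iq L f₁ f₂ 0) := by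
  obtain ⟨hL, hf₁, hf₂, hp₁, hp₂, hunit, -⟩ := h
  have hf₁' : ContDiff ℝ 2 f₁ := hf₁.of_le (WithTop.coe_le_coe.mpr le_top)
  have hf₂' : ContDiff ℝ 2 f₂ := hf₂.of_le (WithTop.coe_le_coe.mpr le_top)
  refine ⟨Im1_nonneg hL (hf₁'.of_le one_le_two) (hf₂'.of_le one_le_two) hp₁.eq hp₂.eq hunit, ?_⟩
  exact (le_abs_self _).trans (abs_le_sqrt (Im1_sq_le_Iq_zero hL hf₁' hf₂' hp₁ hp₂ hunit))
end
end

section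
/- For every global solution of the length-preserving flow, the quantity I₀ is integrable in time: ∫₀^∞ I₀(t) dt ≤ L²/2 − 2π A(0) < ∞, where L = L(0) is the (constant) length. -/
/-!
Under the length-preserving flow the enclosed area can only grow. Differentiating
`A(t) = -½ ∫ f · ν ds` under the integral sign and integrating by parts in `s` (Clairaut and
periodicity make the second-order terms cancel) gives `A' = -∫ ∂ₜf · ν ds`; inserting the flow
equation and the rotation number `∫ κ ds = 2π` turns this into
`A' = (L ∫ κ² ds - 4π²) / (2π) = I₀ / (2π) ≥ 0`.
On the other hand `A ≤ L² / (4π)` by the isoperimetric inequality, which we prove as Hurwitz did: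
for the Fourier coefficients `cₙ` of the closed curve in `ℂ`, Parseval gives
`A = π ∑ n |cₙ|² ≤ π ∑ n² |cₙ|² = L² / (4π)`.
So `2πA` is a nondecreasing function with derivative `I₀`, bounded by `L²/2`, and
`∫₀^∞ I₀ dt ≤ L²/2 - 2πA(0)`.
-/

open Real MeasureTheory

noncomputable section

/-- Curvature of the time-`t` curve of a flow. -/
def flowKappa (f₁ f₂ : ℝ → ℝ → ℝ) (t s : ℝ) : ℝ :=
  kappa (fun s => f₁ s t) (fun s => f₂ s t) s

/-- Deviation of curvature of the time-`t` curve of a flow. -/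
def flowKappaDev (L : ℝ → ℝ) (f₁ f₂ : ℝ → ℝ → ℝ) (t s : ℝ) : ℝ :=
  kappaDev (L t) (fun s => f₁ s t) (fun s => f₂ s t) s

/-- The quantity `I_ℓ(t)` along a flow. -/
def flowIq (L : ℝ → ℝ) (f₁ f₂ : ℝ → ℝ → ℝ) (ℓ : ℕ) (t : ℝ) : ℝ :=
  Iq (L t) (fun s => f₁ s t) (fun s => f₂ s t) ℓ

/-- The signed area `A(t)` along a flow. -/
def flowArea (L : ℝ → ℝ) (f₁ f₂ : ℝ → ℝ → ℝ) (t : ℝ) : ℝ :=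
  areaA (L t) (fun s => f₁ s t) (fun s => f₂ s t)

/-- The quantity `I₋₁(t)` along a flow. -/
def flowIm1 (L : ℝ → ℝ) (f₁ f₂ : ℝ → ℝ → ℝ) (t : ℝ) : ℝ :=
  Im1 (L t) (fun s => f₁ s t) (fun s => f₂ s t)

/-- The normal velocity `∂ₜ f · ν` of a flow (the time derivative being taken
within the time interval `[0, ∞)`). -/
def nvel (f₁ f₂ : ℝ → ℝ → ℝ) (t s : ℝ) : ℝ :=
  derivWithin (fun τ => f₁ s τ) (Set.Ici 0) t * (-(deriv (fun u => f₂ u t) s)) +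
  derivWithin (fun τ => f₂ s τ) (Set.Ici 0) t * deriv (fun u => f₁ u t) s

/-- The conditions common to all global curvature flows considered here: `f = (f₁, f₂)` is
smooth on `ℝ × [0, ∞)` and, for each `t ≥ 0`, the curve `f(·, t)` is `L(t)`-periodic,
parametrized by arc length, and has rotation number `1`. -/
def IsGlobalFlow (L : ℝ → ℝ) (f₁ f₂ : ℝ → ℝ → ℝ) : Prop :=
  ContDiffOn ℝ (⊤ : ℕ∞) (fun p : ℝ × ℝ => (f₁ p.1 p.2, f₂ p.1 p.2))
    (Set.univ ×ˢ Set.Ici 0) ∧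
  ∀ t, 0 ≤ t →
    0 < L t ∧
    Function.Periodic (fun s => f₁ s t) (L t) ∧
    Function.Periodic (fun s => f₂ s t) (L t) ∧
    (∀ s, (deriv (fun u => f₁ u t) s) ^ 2 + (deriv (fun u => f₂ u t) s) ^ 2 = 1) ∧
    (∫ s in (0:ℝ)..(L t), flowKappa f₁ f₂ t s) = 2 * π

/-- A global solution of the length-preserving flow
`∂ₜ f · ν = κ − (1/(2π)) ∫₀^L κ² ds`, with positive initial signed area. -/
def IsLPFlow (L : ℝ → ℝ) (f₁ f₂ : ℝ → ℝ → ℝ) : Prop :=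
  IsGlobalFlow L f₁ f₂ ∧ 0 < flowArea L f₁ f₂ 0 ∧
  ∀ t, 0 ≤ t → ∀ s,
    nvel f₁ f₂ t s =
      flowKappa f₁ f₂ t s -
        (1 / (2 * π)) * ∫ u in (0:ℝ)..(L t), (flowKappa f₁ f₂ t u) ^ 2

open Function

section Fourier

open Complex ComplexConjugate

theorem hasSum_conj_fourierCoeffOn_mul {a b : ℝ} {f g : ℝ → ℂ} (hab : a < b)
    (hf : MemLp f 2 (volume.restrict (Set.Ioc a b)))
    (hg : MemLp g 2 (volume.restrict (Set.Ioc a b))) :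
    HasSum (fun i => conj (fourierCoeffOn hab f i) * fourierCoeffOn hab g i)
      ((b - a)⁻¹ • ∫ x in a..b, conj (f x) * g x) := by
  have := Fact.mk (by linarith : 0 < b - a)
  -- the lift to `AddCircle (b - a)` is set up on intervals of the form `(a, a + T]`
  rw [← add_sub_cancel a b] at hf hg
  have hF := hf.memLp_liftIoc.haarAddCircle
  have hG := hg.memLp_liftIoc.haarAddCircle
  have hinner : inner ℂ hF.toLp hG.toLp = (b - a)⁻¹ • ∫ x in a..b, conj (f x) * g x := by
    have h := AddCircle.integral_liftIoc_eq_intervalIntegral (T := b - a) (t := a)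
      (f := fun x => conj (f x) * g x)
    rw [add_sub_cancel] at h
    rw [← h, ← AddCircle.integral_haarAddCircle, MeasureTheory.L2.inner_def]
    refine integral_congr_ae ?_
    filter_upwards [hF.coeFn_toLp, hG.coeFn_toLp] with x hx hy
    rw [hx, hy, RCLike.inner_apply, mul_comm]
    rfl
  rw [← hinner]
  refine (fourierBasis.hasSum_inner_mul_inner hF.toLp hG.toLp).congr_fun fun i => ?_
  rw [← inner_conj_symm, ← fourierBasis.repr_apply_apply, ← fourierBasis.repr_apply_apply,
    fourierBasis_repr, fourierBasis_repr, fourierCoeff_congr_ae hF.coeFn_toLp,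
    fourierCoeff_congr_ae hG.coeFn_toLp, fourierCoeff_liftIoc_eq, fourierCoeff_liftIoc_eq]
  simp only [add_sub_cancel]

theorem fourierCoeffOn_deriv_of_eq {a b : ℝ} (hab : a < b) {f f' : ℝ → ℂ}
    (hf : ∀ x ∈ Set.uIcc a b, HasDerivAt f (f' x) x) (hf' : IntervalIntegrable f' volume a b)
    (hfab : f a = f b) (n : ℤ) :
    fourierCoeffOn hab f' n = 2 * π * I * n / (b - a) * fourierCoeffOn hab f n := by
  rcases eq_or_ne n 0 with rfl | hn
  · rw [fourierCoeffOn_eq_integral, neg_zero, Int.cast_zero]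
    simp only [fourier_zero, one_smul, intervalIntegral.integral_eq_sub_of_hasDerivAt hf hf',
      hfab, sub_self, smul_zero]
    ring
  · have key := fourierCoeffOn_of_hasDerivAt hab hn hf hf'
    rw [hfab, sub_self, mul_zero, zero_sub] at key
    have hba : (b : ℂ) - a ≠ 0 := sub_ne_zero.2 (by exact_mod_cast hab.ne')
    have hn' : (n : ℂ) ≠ 0 := by exact_mod_cast hn
    rw [key]
    field_simp

theorem Continuous.memLp_restrict_Ioc {E : Type*} [NormedAddCommGroup E] {f : ℝ → E}
    (hf : Continuous f) (p : ENNReal) (a b : ℝ) : MemLp f p (volume.restrict (Set.Ioc a b)) := by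
  obtain ⟨C, hC⟩ := isCompact_Icc.exists_bound_of_continuousOn (hf.continuousOn (s := Set.Icc a b))
  exact MemLp.of_bound hf.aestronglyMeasurable C
    (ae_restrict_of_forall_mem measurableSet_Ioc fun x hx => hC x (Set.Ioc_subset_Icc_self hx))

variable {L : ℝ} {z w : ℝ → ℂ}

theorem fourierCoeffOn_eq_mul_I_mul (hL : 0 < L) (hz : ∀ s, HasDerivAt z (w s) s)
    (hw : Continuous w) (hzL : z 0 = z L) (n : ℤ) :
    fourierCoeffOn hL w n = ((2 * π * n / L : ℝ) : ℂ) * I * fourierCoeffOn hL z n := by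
  rw [fourierCoeffOn_deriv_of_eq hL (fun s _ => hz s) (hw.intervalIntegrable _ _) hzL]
  push_cast
  ring

theorem hasSum_sq_mul_normSq_fourierCoeffOn (hL : 0 < L) (hz : ∀ s, HasDerivAt z (w s) s)
    (hw : Continuous w) (hzL : z 0 = z L) :
    HasSum (fun n : ℤ => (2 * π * n / L) ^ 2 * normSq (fourierCoeffOn hL z n))
      (L⁻¹ * ∫ s in (0:ℝ)..L, normSq (w s)) := by
  have h := (hasSum_conj_fourierCoeffOn_mul hL (hw.memLp_restrict_Ioc 2 0 L)
    (hw.memLp_restrict_Ioc 2 0 L)).mapL reCLM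
  simp only [fourierCoeffOn_eq_mul_I_mul hL hz hw hzL, ← normSq_eq_conj_mul_self,
    intervalIntegral.integral_ofReal, sub_zero] at h
  convert h using 1
  · ext n
    simp only [reCLM_apply, ofReal_re, normSq_mul, normSq_ofReal, normSq_I]
    ring
  · simp

theorem hasSum_mul_normSq_fourierCoeffOn (hL : 0 < L) (hz : ∀ s, HasDerivAt z (w s) s)
    (hw : Continuous w) (hzL : z 0 = z L) :
    HasSum (fun n : ℤ => 2 * π * n / L * normSq (fourierCoeffOn hL z n))
      (L⁻¹ * ∫ s in (0:ℝ)..L, (conj (z s) * w s).im) := by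
  have hzc : Continuous z := continuous_iff_continuousAt.2 fun s => (hz s).continuousAt
  have h := (hasSum_conj_fourierCoeffOn_mul hL (hzc.memLp_restrict_Ioc 2 0 L)
    (hw.memLp_restrict_Ioc 2 0 L)).mapL imCLM
  have hint : IntervalIntegrable (fun s => conj (z s) * w s) volume 0 L :=
    ((continuous_conj.comp hzc).mul hw).intervalIntegrable _ _
  simp only [fourierCoeffOn_eq_mul_I_mul hL hz hw hzL, sub_zero, map_smul,
    ← imCLM.intervalIntegral_comp_comm hint] at h
  have hterm : ∀ (r : ℝ) (c : ℂ), (conj c * (r * I * c)).im = r * normSq c := fun r c => by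
    rw [show conj c * (r * I * c) = ↑(r * normSq c) * I by
      rw [ofReal_mul, normSq_eq_conj_mul_self]; ring, mul_I_im, ofReal_re]
  simp only [imCLM_apply, hterm] at h
  convert h using 1
  simp

theorem areaA_le_sq_div_four_pi (hL : 0 < L) {g₁ g₂ : ℝ → ℝ}
    (hg₁ : ContDiff ℝ 1 g₁) (hg₂ : ContDiff ℝ 1 g₂) (h₁ : g₁ 0 = g₁ L) (h₂ : g₂ 0 = g₂ L)
    (harc : ∀ s, deriv g₁ s ^ 2 + deriv g₂ s ^ 2 = 1) :
    areaA L g₁ g₂ ≤ L ^ 2 / (4 * π) := by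
  set z : ℝ → ℂ := fun s => g₁ s + g₂ s * I
  set w : ℝ → ℂ := fun s => deriv g₁ s + deriv g₂ s * I
  have hz : ∀ s, HasDerivAt z (w s) s := fun s =>
    ((hg₁.differentiable one_ne_zero s).hasDerivAt.ofReal_comp).add
      ((hg₂.differentiable one_ne_zero s).hasDerivAt.ofReal_comp.mul_const I)
  have hw : Continuous w :=
    (continuous_ofReal.comp (hg₁.continuous_deriv le_rfl)).add
      ((continuous_ofReal.comp (hg₂.continuous_deriv le_rfl)).mul continuous_const)
  have hzL : z 0 = z L := by simp [z, h₁, h₂]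
  have hlength : ∫ s in (0:ℝ)..L, normSq (w s) = L := by
    simp [w, normSq_add_mul_I, harc]
  have harea : ∫ s in (0:ℝ)..L, (conj (z s) * w s).im = 2 * areaA L g₁ g₂ := by
    rw [areaA, ← mul_assoc, show (2 : ℝ) * -(1 / 2) = -1 by norm_num, neg_one_mul,
      ← intervalIntegral.integral_neg]
    congr 1 with s
    simp only [z, w, map_add, map_mul, conj_ofReal, conj_I, add_im, add_re, mul_im, mul_re,
      ofReal_re, ofReal_im, I_re, I_im, neg_re, neg_im]
    ring
  have hA : HasSum (fun n : ℤ => π * n * normSq (fourierCoeffOn hL z n)) (areaA L g₁ g₂) := by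
    have h := (hasSum_mul_normSq_fourierCoeffOn hL hz hw hzL).mul_left (L / 2)
    rw [harea, show L / 2 * (L⁻¹ * (2 * areaA L g₁ g₂)) = areaA L g₁ g₂ by field_simp] at h
    exact h.congr_fun fun n => by field_simp
  have hiso :
      HasSum (fun n : ℤ => π * n ^ 2 * normSq (fourierCoeffOn hL z n)) (L ^ 2 / (4 * π)) := by
    have h := (hasSum_sq_mul_normSq_fourierCoeffOn hL hz hw hzL).mul_left (L ^ 2 / (4 * π))
    rw [hlength, inv_mul_cancel₀ hL.ne', mul_one] at h
    exact h.congr_fun fun n => by field_simp [pi_ne_zero]; ring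
  refine hasSum_le (fun n => ?_) hA hiso
  have hn : (n : ℝ) ≤ n ^ 2 := by exact_mod_cast Int.le_self_sq n
  exact mul_le_mul_of_nonneg_right (mul_le_mul_of_nonneg_left hn pi_pos.le) (normSq_nonneg _)

end Fourier

section PartialDerivatives

variable {E : Type*} [NormedAddCommGroup E] [NormedSpace ℝ E]

theorem HasFDerivAt.hasDerivAt_slice_fst {G : ℝ × ℝ → E} {G' : ℝ × ℝ →L[ℝ] E} {s t : ℝ}
    (h : HasFDerivAt G G' (s, t)) : HasDerivAt (fun u => G (u, t)) (G' (1, 0)) s :=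
  h.comp_hasDerivAt s ((hasDerivAt_id s).prodMk (hasDerivAt_const s t))

theorem HasFDerivAt.hasDerivAt_slice_snd {G : ℝ × ℝ → E} {G' : ℝ × ℝ →L[ℝ] E} {s t : ℝ}
    (h : HasFDerivAt G G' (s, t)) : HasDerivAt (fun τ => G (s, τ)) (G' (0, 1)) t :=
  h.comp_hasDerivAt t ((hasDerivAt_const t s).prodMk (hasDerivAt_id t))

def partialS (f : ℝ → ℝ → ℝ) (s t : ℝ) : ℝ := deriv (fun u => f u t) s

def partialT (f : ℝ → ℝ → ℝ) (s t : ℝ) : ℝ := deriv (f s) t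

variable {f : ℝ → ℝ → ℝ} {s t : ℝ} {U : Set (ℝ × ℝ)} {T : Set ℝ} {m n : WithTop ℕ∞}

theorem partialS_eq_fderiv (hf : DifferentiableAt ℝ (uncurry f) (s, t)) :
    partialS f s t = fderiv ℝ (uncurry f) (s, t) (1, 0) :=
  hf.hasFDerivAt.hasDerivAt_slice_fst.deriv

theorem partialT_eq_fderiv (hf : DifferentiableAt ℝ (uncurry f) (s, t)) :
    partialT f s t = fderiv ℝ (uncurry f) (s, t) (0, 1) :=
  hf.hasFDerivAt.hasDerivAt_slice_snd.deriv

theorem hasDerivAt_partialS (hf : DifferentiableAt ℝ (uncurry f) (s, t)) :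
    HasDerivAt (fun u => f u t) (partialS f s t) s := by
  rw [partialS_eq_fderiv hf]
  exact hf.hasFDerivAt.hasDerivAt_slice_fst

theorem hasDerivAt_partialT (hf : DifferentiableAt ℝ (uncurry f) (s, t)) :
    HasDerivAt (f s) (partialT f s t) t := by
  rw [partialT_eq_fderiv hf]
  exact hf.hasFDerivAt.hasDerivAt_slice_snd

theorem ContDiffOn.partialS_of_isOpen (hU : IsOpen U) (hf : ContDiffOn ℝ n (uncurry f) U)
    (hmn : m + 1 ≤ n) : ContDiffOn ℝ m (uncurry (partialS f)) U := by
  have hdiff := hf.differentiableOn (by rintro rfl; simp at hmn)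
  refine ((hf.fderiv_of_isOpen hU hmn).clm_apply
    (contDiffOn_const (c := ((1 : ℝ), (0 : ℝ))))).congr fun p hp => ?_
  exact partialS_eq_fderiv ((hdiff p hp).differentiableAt (hU.mem_nhds hp))

theorem ContDiffOn.partialT_of_isOpen (hU : IsOpen U) (hf : ContDiffOn ℝ n (uncurry f) U)
    (hmn : m + 1 ≤ n) : ContDiffOn ℝ m (uncurry (partialT f)) U := by
  have hdiff := hf.differentiableOn (by rintro rfl; simp at hmn)
  refine ((hf.fderiv_of_isOpen hU hmn).clm_apply
    (contDiffOn_const (c := ((0 : ℝ), (1 : ℝ))))).congr fun p hp => ?_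
  exact partialT_eq_fderiv ((hdiff p hp).differentiableAt (hU.mem_nhds hp))

theorem partialT_partialS (hf : ContDiffAt ℝ 2 (uncurry f) (s, t)) :
    partialT (partialS f) s t = partialS (partialT f) s t := by
  set F := uncurry f
  have hdiff : ∀ᶠ p in nhds (s, t), DifferentiableAt ℝ F p :=
    (hf.eventually (by simp)).mono fun p hp => hp.differentiableAt two_ne_zero
  have hF' : HasFDerivAt (fderiv ℝ F) (fderiv ℝ (fderiv ℝ F) (s, t)) (s, t) :=
    ((hf.fderiv_right (m := 1) le_rfl).differentiableAt one_ne_zero).hasFDerivAt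
  have hS : (fun τ => partialS f s τ) =ᶠ[nhds t] fun τ => fderiv ℝ F (s, τ) (1, 0) :=
    ((continuous_const.prodMk continuous_id).tendsto t).eventually hdiff |>.mono
      fun τ hτ => partialS_eq_fderiv hτ
  have hT : (fun u => partialT f u t) =ᶠ[nhds s] fun u => fderiv ℝ F (u, t) (0, 1) :=
    ((continuous_id.prodMk continuous_const).tendsto s).eventually hdiff |>.mono
      fun u hu => partialT_eq_fderiv hu
  have hST : HasDerivAt (fun τ => fderiv ℝ F (s, τ) (1, 0))
      (fderiv ℝ (fderiv ℝ F) (s, t) (0, 1) (1, 0)) t := by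
    simpa using hF'.hasDerivAt_slice_snd.clm_apply (hasDerivAt_const t ((1 : ℝ), (0 : ℝ)))
  have hTS : HasDerivAt (fun u => fderiv ℝ F (u, t) (0, 1))
      (fderiv ℝ (fderiv ℝ F) (s, t) (1, 0) (0, 1)) s := by
    simpa using hF'.hasDerivAt_slice_fst.clm_apply (hasDerivAt_const s ((0 : ℝ), (1 : ℝ)))
  calc partialT (partialS f) s t = fderiv ℝ (fderiv ℝ F) (s, t) (0, 1) (1, 0) :=
        hS.deriv_eq.trans hST.deriv
    _ = fderiv ℝ (fderiv ℝ F) (s, t) (1, 0) (0, 1) := hf.isSymmSndFDerivAt (by simp) _ _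
    _ = partialS (partialT f) s t := (hT.deriv_eq.trans hTS.deriv).symm

theorem ContDiffOn.contDiff_slice (hf : ContDiffOn ℝ n (uncurry f) (Set.univ ×ˢ T))
    (ht : t ∈ T) : ContDiff ℝ n fun s => f s t := by
  rw [← contDiffOn_univ]
  exact hf.comp (contDiff_id.prodMk contDiff_const).contDiffOn fun _ _ => ⟨trivial, ht⟩

theorem ContinuousOn.continuous_slice (hf : ContinuousOn (uncurry f) (Set.univ ×ˢ T))
    (ht : t ∈ T) : Continuous fun s => f s t :=
  hf.comp_continuous (continuous_id.prodMk continuous_const) fun _ => ⟨trivial, ht⟩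

theorem ContDiffOn.continuous_slices (hT : IsOpen T)
    (hf : ContDiffOn ℝ 2 (uncurry f) (Set.univ ×ˢ T)) (ht : t ∈ T) :
    (Continuous fun s => f s t) ∧ (Continuous fun s => partialS f s t) ∧
      (Continuous fun s => partialT f s t) ∧ Continuous fun s => partialS (partialT f) s t := by
  have hU : IsOpen ((Set.univ : Set ℝ) ×ˢ T) := isOpen_univ.prod hT
  refine ⟨hf.continuousOn.continuous_slice ht,
    (hf.partialS_of_isOpen hU (m := 0) (by norm_num)).continuousOn.continuous_slice ht,
    (hf.partialT_of_isOpen hU (m := 0) (by norm_num)).continuousOn.continuous_slice ht, ?_⟩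
  exact (((hf.partialT_of_isOpen hU (m := 1) (by norm_num)).partialS_of_isOpen hU (m := 0)
    (by norm_num)).continuousOn.continuous_slice ht)

theorem ContDiffOn.continuousOn_partialS (hT : UniqueDiffOn ℝ T)
    (hf : ContDiffOn ℝ n (uncurry f) (Set.univ ×ˢ T)) (hn : 1 ≤ n) :
    ContinuousOn (uncurry (partialS f)) (Set.univ ×ˢ T) := by
  refine ((hf.continuousOn_fderivWithin (uniqueDiffOn_univ.prod hT) hn).clm_apply
    (continuousOn_const (c := ((1 : ℝ), (0 : ℝ))))).congr ?_
  rintro ⟨s, t⟩ hp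
  have hF := ((hf.differentiableOn (by rintro rfl; simp at hn)) _ hp).hasFDerivWithinAt
  have hline : HasDerivWithinAt (fun u => (u, t)) ((1 : ℝ), (0 : ℝ)) Set.univ s :=
    ((hasDerivAt_id s).prodMk (hasDerivAt_const s t)).hasDerivWithinAt
  have hmaps : Set.MapsTo (fun u : ℝ => (u, t)) Set.univ (Set.univ ×ˢ T) :=
    fun _ _ => ⟨trivial, hp.2⟩
  exact (hasDerivWithinAt_univ.1 (hF.comp_hasDerivWithinAt s hline hmaps)).deriv

theorem hasDerivAt_intervalIntegral_of_contDiffOn {F : ℝ → ℝ → ℝ} {V : Set ℝ}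
    (hV : IsOpen V) {a b t : ℝ} (ht : t ∈ V) (hF : ContDiffOn ℝ 1 (uncurry F) (Set.univ ×ˢ V)) :
    HasDerivAt (fun τ => ∫ s in a..b, F s τ) (∫ s in a..b, partialT F s t) t := by
  have hU : IsOpen ((Set.univ : Set ℝ) ×ˢ V) := isOpen_univ.prod hV
  have hF' : ContinuousOn (uncurry (partialT F)) (Set.univ ×ˢ V) :=
    (hF.partialT_of_isOpen hU (m := 0) (by norm_num)).continuousOn
  obtain ⟨ε, hε, hball⟩ := Metric.nhds_basis_closedBall.mem_iff.1 (hV.mem_nhds ht)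
  obtain ⟨C, hC⟩ := (isCompact_uIcc.prod (isCompact_closedBall t ε)).exists_bound_of_continuousOn
    (hF'.mono (Set.prod_mono (Set.subset_univ _) hball))
  refine (intervalIntegral.hasDerivAt_integral_of_dominated_loc_of_deriv_le
    (F := fun τ s => F s τ) (F' := fun τ s => partialT F s τ) (bound := fun _ => C)
    (Metric.ball_mem_nhds t hε) ?_ ((hF.continuousOn.continuous_slice ht).intervalIntegrable _ _)
    (hF'.continuous_slice ht).aestronglyMeasurable ?_ intervalIntegrable_const ?_).2
  · filter_upwards [hV.mem_nhds ht] with τ hτ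
    exact (hF.continuousOn.continuous_slice hτ).aestronglyMeasurable
  · refine Filter.Eventually.of_forall fun s hs τ hτ => hC (s, τ) ⟨?_, ?_⟩
    · exact Set.uIoc_subset_uIcc hs
    · exact Metric.ball_subset_closedBall hτ
  · refine Filter.Eventually.of_forall fun s _ τ hτ => hasDerivAt_partialT (f := F) ?_
    have hτV : (s, τ) ∈ Set.univ ×ˢ V := ⟨trivial, hball (Metric.ball_subset_closedBall hτ)⟩
    exact (hF.contDiffAt (hU.mem_nhds hτV)).differentiableAt one_ne_zero

end PartialDerivatives

section FirstVariation

/-- `areaA L (f₁ · t) (f₂ · t)` is `-(1/2) * ∫ s in 0..L, areaDensity f₁ f₂ s t`. -/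
def areaDensity (f₁ f₂ : ℝ → ℝ → ℝ) (s t : ℝ) : ℝ :=
  f₁ s t * -partialS f₂ s t + f₂ s t * partialS f₁ s t

variable {f₁ f₂ : ℝ → ℝ → ℝ} {U : Set (ℝ × ℝ)} {V : Set ℝ} {L s t : ℝ}

theorem contDiffOn_areaDensity (hU : IsOpen U) (hf₁ : ContDiffOn ℝ 2 (uncurry f₁) U)
    (hf₂ : ContDiffOn ℝ 2 (uncurry f₂) U) : ContDiffOn ℝ 1 (uncurry (areaDensity f₁ f₂)) U :=
  ((hf₁.of_le one_le_two).mul (hf₂.partialS_of_isOpen hU le_rfl).neg).add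
    ((hf₂.of_le one_le_two).mul (hf₁.partialS_of_isOpen hU le_rfl))

/-- The second summand is `∂ₛ (f₂ ∂ₜf₁ - f₁ ∂ₜf₂)`, which integrates to zero over a period. -/
theorem partialT_areaDensity (hU : IsOpen U) (hf₁ : ContDiffOn ℝ 2 (uncurry f₁) U)
    (hf₂ : ContDiffOn ℝ 2 (uncurry f₂) U) (hst : (s, t) ∈ U) :
    partialT (areaDensity f₁ f₂) s t =
      2 * (partialT f₁ s t * -partialS f₂ s t + partialT f₂ s t * partialS f₁ s t) +
        ((partialS f₂ s t * partialT f₁ s t + f₂ s t * partialS (partialT f₁) s t) -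
          (partialS f₁ s t * partialT f₂ s t + f₁ s t * partialS (partialT f₂) s t)) := by
  have hd : ∀ {k : ℝ → ℝ → ℝ}, ContDiffOn ℝ 1 (uncurry k) U → HasDerivAt (k s) (partialT k s t) t :=
    fun hk => hasDerivAt_partialT ((hk.contDiffAt (hU.mem_nhds hst)).differentiableAt one_ne_zero)
  have hderiv := ((hd (hf₁.of_le one_le_two)).mul (hd (hf₂.partialS_of_isOpen hU le_rfl)).neg).add
    ((hd (hf₂.of_le one_le_two)).mul (hd (hf₁.partialS_of_isOpen hU le_rfl)))
  refine hderiv.deriv.trans ?_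
  rw [Pi.neg_apply, partialT_partialS (hf₁.contDiffAt (hU.mem_nhds hst)),
    partialT_partialS (hf₂.contDiffAt (hU.mem_nhds hst))]
  ring

theorem integral_partialS_mul_partialT_eq_zero {g h : ℝ → ℝ → ℝ} (hV : IsOpen V) (ht : t ∈ V)
    (hg : ContDiffOn ℝ 2 (uncurry g) (Set.univ ×ˢ V))
    (hh : ContDiffOn ℝ 2 (uncurry h) (Set.univ ×ˢ V))
    (hg₀ : g 0 t = g L t) (hh₀ : ∀ τ ∈ V, h 0 τ = h L τ) :
    ∫ s in (0:ℝ)..L, (partialS g s t * partialT h s t + g s t * partialS (partialT h) s t) = 0 := by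
  have hU : IsOpen ((Set.univ : Set ℝ) ×ˢ V) := isOpen_univ.prod hV
  have hd : ∀ {k : ℝ → ℝ → ℝ}, ContDiffOn ℝ 1 (uncurry k) (Set.univ ×ˢ V) →
      ∀ s, HasDerivAt (fun u => k u t) (partialS k s t) s := fun hk s =>
    hasDerivAt_partialS ((hk.contDiffAt (hU.mem_nhds ⟨trivial, ht⟩)).differentiableAt one_ne_zero)
  obtain ⟨cg, cSg, -, -⟩ := hg.continuous_slices hV ht
  obtain ⟨-, -, cTh, cSTh⟩ := hh.continuous_slices hV ht
  have hderiv : ∀ s ∈ Set.uIcc 0 L, HasDerivAt (fun u => g u t * partialT h u t)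
      (partialS g s t * partialT h s t + g s t * partialS (partialT h) s t) s := fun s _ =>
    (hd (hg.of_le one_le_two) s).mul (hd (hh.partialT_of_isOpen hU le_rfl) s)
  rw [intervalIntegral.integral_eq_sub_of_hasDerivAt hderiv
    (((cSg.mul cTh).add (cg.mul cSTh)).intervalIntegrable _ _), hg₀, partialT, partialT,
    (Filter.eventuallyEq_of_mem (hV.mem_nhds ht) hh₀).deriv_eq, sub_self]

theorem hasDerivAt_areaA_slice (hV : IsOpen V) (ht : t ∈ V)
    (hf₁ : ContDiffOn ℝ 2 (uncurry f₁) (Set.univ ×ˢ V))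
    (hf₂ : ContDiffOn ℝ 2 (uncurry f₂) (Set.univ ×ˢ V))
    (hp₁ : ∀ τ ∈ V, f₁ 0 τ = f₁ L τ) (hp₂ : ∀ τ ∈ V, f₂ 0 τ = f₂ L τ) :
    HasDerivAt (fun τ => areaA L (fun s => f₁ s τ) (fun s => f₂ s τ))
      (-∫ s in (0:ℝ)..L, (partialT f₁ s t * -partialS f₂ s t + partialT f₂ s t * partialS f₁ s t))
      t := by
  have hU : IsOpen ((Set.univ : Set ℝ) ×ˢ V) := isOpen_univ.prod hV
  refine ((hasDerivAt_intervalIntegral_of_contDiffOn hV ht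
    (contDiffOn_areaDensity hU hf₁ hf₂)).const_mul (-(1 / 2) : ℝ)).congr_deriv ?_
  obtain ⟨c₁, cS₁, cT₁, cST₁⟩ := hf₁.continuous_slices hV ht
  obtain ⟨c₂, cS₂, cT₂, cST₂⟩ := hf₂.continuous_slices hV ht
  have hii : ∀ {φ : ℝ → ℝ}, Continuous φ → IntervalIntegrable φ volume 0 L :=
    fun hφ => hφ.intervalIntegrable _ _
  rw [intervalIntegral.integral_congr fun s _ => partialT_areaDensity hU hf₁ hf₂ ⟨trivial, ht⟩,
    intervalIntegral.integral_add (hii (by fun_prop)) (hii (by fun_prop)),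
    intervalIntegral.integral_sub (hii (by fun_prop)) (hii (by fun_prop)),
    integral_partialS_mul_partialT_eq_zero hV ht hf₂ hf₁ (hp₂ t ht) hp₁,
    integral_partialS_mul_partialT_eq_zero hV ht hf₁ hf₂ (hp₁ t ht) hp₂,
    intervalIntegral.integral_const_mul]
  ring

end FirstVariation

theorem ContDiff.continuous_kappa {g₁ g₂ : ℝ → ℝ} (hg₁ : ContDiff ℝ 2 g₁) (hg₂ : ContDiff ℝ 2 g₂) :
    Continuous (kappa g₁ g₂) :=
  ((hg₁.deriv' (n := 1)).continuous_deriv le_rfl |>.mul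
    (hg₂.continuous_deriv (by norm_num)).neg).add
  ((hg₂.deriv' (n := 1)).continuous_deriv le_rfl |>.mul (hg₁.continuous_deriv (by norm_num)))

theorem Iq_zero_eq {L : ℝ} (hL : L ≠ 0) {g₁ g₂ : ℝ → ℝ} (hκ : Continuous (kappa g₁ g₂))
    (hrot : ∫ s in (0:ℝ)..L, kappa g₁ g₂ s = 2 * π) :
    Iq L g₁ g₂ 0 = L * (∫ s in (0:ℝ)..L, kappa g₁ g₂ s ^ 2) - 4 * π ^ 2 := by
  have hexpand : ∀ s, (kappa g₁ g₂ s - 2 * π / L) ^ 2 =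
      kappa g₁ g₂ s ^ 2 - 4 * π / L * kappa g₁ g₂ s + (2 * π / L) ^ 2 := fun s => by ring
  have hκ2 : IntervalIntegrable (fun s => kappa g₁ g₂ s ^ 2) volume 0 L :=
    (hκ.pow 2).intervalIntegrable _ _
  have hκc : IntervalIntegrable (fun s => 4 * π / L * kappa g₁ g₂ s) volume 0 L :=
    (hκ.const_mul _).intervalIntegrable _ _
  simp only [Iq, kappaDev, Function.iterate_zero, id_eq, hexpand]
  rw [intervalIntegral.integral_add (hκ2.sub hκc) intervalIntegrable_const,
    intervalIntegral.integral_sub hκ2 hκc, intervalIntegral.integral_const_mul, hrot,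
    intervalIntegral.integral_const, smul_eq_mul]
  field_simp
  ring

theorem Iq_nonneg {L : ℝ} (hL : 0 ≤ L) (g₁ g₂ : ℝ → ℝ) (ℓ : ℕ) : 0 ≤ Iq L g₁ g₂ ℓ :=
  mul_nonneg (pow_nonneg hL _) (intervalIntegral.integral_nonneg hL fun _ _ => sq_nonneg _)

theorem integrableOn_Ioi_deriv_of_nonneg_of_le {g g' : ℝ → ℝ} {a M : ℝ}
    (hcont : ContinuousWithinAt g (Set.Ici a) a)
    (hderiv : ∀ x ∈ Set.Ioi a, HasDerivAt g (g' x) x) (hpos : ∀ x ∈ Set.Ioi a, 0 ≤ g' x)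
    (hle : ∀ x ∈ Set.Ioi a, g x ≤ M) :
    IntegrableOn g' (Set.Ioi a) ∧ ∫ x in Set.Ioi a, g' x ≤ M - g a := by
  have hcontOn : ∀ b, ContinuousOn g (Set.Icc a b) := by
    intro b x hx
    rcases hx.1.eq_or_lt with rfl | hax
    · exact hcont.mono Set.Icc_subset_Ici_self
    · exact (hderiv x hax).continuousAt.continuousWithinAt
  have hint : ∀ b, IntegrableOn g' (Set.Ioc a b) := fun b =>
    intervalIntegral.integrableOn_deriv_of_nonneg (hcontOn b) (fun x hx => hderiv x hx.1)
      fun x hx => hpos x hx.1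
  have hbound : ∀ᶠ b in Filter.atTop, ∫ x in a..b, g' x ≤ M - g a := by
    filter_upwards [Filter.eventually_gt_atTop a] with b hab
    rw [intervalIntegral.integral_eq_sub_of_hasDerivAt_of_le hab.le (hcontOn b)
      (fun x hx => hderiv x hx.1)
      ((intervalIntegrable_iff_integrableOn_Ioc_of_le hab.le).2 (hint b))]
    linarith [hle b hab]
  have hnorm : ∀ᶠ b in Filter.atTop, ∫ x in a..b, ‖g' x‖ ≤ M - g a := by
    filter_upwards [hbound, Filter.eventually_ge_atTop a] with b hb hab
    refine le_of_eq_of_le (intervalIntegral.integral_congr_ae (ae_of_all _ fun x hx => ?_)) hb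
    rw [Set.uIoc_of_le hab] at hx
    exact Real.norm_of_nonneg (hpos x hx.1)
  have hi : IntegrableOn g' (Set.Ioi a) :=
    integrableOn_Ioi_of_intervalIntegral_norm_bounded _ a hint Filter.tendsto_id hnorm
  exact ⟨hi, le_of_tendsto (intervalIntegral_tendsto_integral_Ioi a hi Filter.tendsto_id) hbound⟩

section Flow

variable {L : ℝ → ℝ} {f₁ f₂ : ℝ → ℝ → ℝ} {t : ℝ}

theorem IsGlobalFlow.contDiffOn_fst (h : IsGlobalFlow L f₁ f₂) :
    ContDiffOn ℝ 2 (uncurry f₁) (Set.univ ×ˢ Set.Ici 0) :=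
  (contDiff_fst.comp_contDiffOn h.1).of_le (WithTop.coe_le_coe.2 le_top)

theorem IsGlobalFlow.contDiffOn_snd (h : IsGlobalFlow L f₁ f₂) :
    ContDiffOn ℝ 2 (uncurry f₂) (Set.univ ×ˢ Set.Ici 0) :=
  (contDiff_snd.comp_contDiffOn h.1).of_le (WithTop.coe_le_coe.2 le_top)

theorem IsGlobalFlow.flowArea_le (h : IsGlobalFlow L f₁ f₂) (ht : 0 ≤ t) :
    flowArea L f₁ f₂ t ≤ L t ^ 2 / (4 * π) := by
  obtain ⟨hLpos, hp₁, hp₂, harc, -⟩ := h.2 t ht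
  exact areaA_le_sq_div_four_pi hLpos
    ((h.contDiffOn_fst.contDiff_slice ht).of_le one_le_two)
    ((h.contDiffOn_snd.contDiff_slice ht).of_le one_le_two)
    (by simpa using (hp₁ 0).symm) (by simpa using (hp₂ 0).symm) harc

theorem IsGlobalFlow.continuousWithinAt_flowArea (h : IsGlobalFlow L f₁ f₂)
    (hL : ∀ t, 0 ≤ t → L t = L 0) : ContinuousWithinAt (flowArea L f₁ f₂) (Set.Ici 0) 0 := by
  have hS : ∀ {f : ℝ → ℝ → ℝ}, ContDiffOn ℝ 2 (uncurry f) (Set.univ ×ˢ Set.Ici 0) →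
      ContinuousOn (uncurry (partialS f)) (Set.univ ×ˢ Set.Ici 0) := fun hf =>
    hf.continuousOn_partialS (uniqueDiffOn_Ici 0) one_le_two
  have hP : ContinuousOn (uncurry (areaDensity f₁ f₂)) (Set.univ ×ˢ Set.Ici 0) :=
    (h.contDiffOn_fst.continuousOn.mul (hS h.contDiffOn_snd).neg).add
      (h.contDiffOn_snd.continuousOn.mul (hS h.contDiffOn_fst))
  -- clamping time at `0` extends the density continuously to the whole plane
  have hPmax : Continuous (uncurry fun τ s => areaDensity f₁ f₂ s (max τ 0)) :=
    hP.comp_continuous (continuous_snd.prodMk (continuous_fst.max continuous_const))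
      fun p => ⟨trivial, (le_max_right p.1 0 : (0:ℝ) ≤ _)⟩
  have hcont :
      Continuous fun τ => -(1 / 2 : ℝ) * ∫ s in (0:ℝ)..L 0, areaDensity f₁ f₂ s (max τ 0) :=
    continuous_const.mul
      (intervalIntegral.continuous_parametric_intervalIntegral_of_continuous' hPmax 0 (L 0))
  have heq : ∀ τ ∈ Set.Ici (0:ℝ), flowArea L f₁ f₂ τ =
      -(1 / 2 : ℝ) * ∫ s in (0:ℝ)..L 0, areaDensity f₁ f₂ s (max τ 0) := fun τ hτ => by
    rw [max_eq_left hτ, flowArea, areaA, hL τ hτ]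
    rfl
  exact hcont.continuousWithinAt.congr heq (heq 0 Set.self_mem_Ici)

theorem IsLPFlow.hasDerivAt_flowArea (h : IsLPFlow L f₁ f₂) (hL : ∀ t, 0 ≤ t → L t = L 0)
    (ht : 0 < t) : HasDerivAt (flowArea L f₁ f₂) (flowIq L f₁ f₂ 0 t / (2 * π)) t := by
  obtain ⟨hflow, -, hvel⟩ := h
  obtain ⟨hLpos, -, -, -, hrot⟩ := hflow.2 t ht.le
  rw [hL t ht.le] at hLpos hrot
  have hpos : (Set.univ : Set ℝ) ×ˢ Set.Ioi (0:ℝ) ⊆ Set.univ ×ˢ Set.Ici 0 :=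
    Set.prod_mono le_rfl Set.Ioi_subset_Ici_self
  have hper : ∀ {f : ℝ → ℝ → ℝ}, (∀ τ, 0 ≤ τ → Periodic (fun s => f s τ) (L τ)) →
      ∀ τ ∈ Set.Ioi (0:ℝ), f 0 τ = f (L 0) τ := fun hf τ hτ => by
    simpa [hL τ (le_of_lt hτ)] using (hf τ (le_of_lt hτ) 0).symm
  have hA := hasDerivAt_areaA_slice isOpen_Ioi ht
    (hflow.contDiffOn_fst.mono hpos) (hflow.contDiffOn_snd.mono hpos)
    (hper fun τ hτ => (hflow.2 τ hτ).2.1) (hper fun τ hτ => (hflow.2 τ hτ).2.2.1)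
  have heq : flowArea L f₁ f₂ =ᶠ[nhds t]
      fun τ => areaA (L 0) (fun s => f₁ s τ) (fun s => f₂ s τ) := by
    filter_upwards [Ioi_mem_nhds ht] with τ hτ
    rw [flowArea, hL τ (le_of_lt hτ)]
  refine (hA.congr_of_eventuallyEq heq).congr_deriv ?_
  have hκ : Continuous (flowKappa f₁ f₂ t) := ContDiff.continuous_kappa
    (hflow.contDiffOn_fst.contDiff_slice ht.le) (hflow.contDiffOn_snd.contDiff_slice ht.le)
  have hnvel : ∀ s, partialT f₁ s t * -partialS f₂ s t + partialT f₂ s t * partialS f₁ s t =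
      flowKappa f₁ f₂ t s - 1 / (2 * π) * ∫ u in (0:ℝ)..L 0, flowKappa f₁ f₂ t u ^ 2 := by
    intro s
    have hv := hvel t ht.le s
    rwa [hL t ht.le, nvel, derivWithin_of_mem_nhds (Ici_mem_nhds ht),
      derivWithin_of_mem_nhds (Ici_mem_nhds ht)] at hv
  have hI : flowIq L f₁ f₂ 0 t =
      L 0 * (∫ u in (0:ℝ)..L 0, flowKappa f₁ f₂ t u ^ 2) - 4 * π ^ 2 := by
    rw [flowIq, hL t ht.le]
    exact Iq_zero_eq hLpos.ne' hκ hrot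
  rw [intervalIntegral.integral_congr fun s _ => hnvel s,
    intervalIntegral.integral_sub (hκ.intervalIntegrable _ _) intervalIntegrable_const, hrot,
    intervalIntegral.integral_const, smul_eq_mul, hI]
  field_simp
  ring

end Flow

/-- Along the length-preserving flow (for which `L(t) = L(0) =: L`), the quantity `I₀`
is integrable in time, with `∫₀^∞ I₀(t) dt ≤ L²/2 − 2πA(0) < ∞`. -/
theorem stmt_11 (L : ℝ → ℝ) (f₁ f₂ : ℝ → ℝ → ℝ) (h : IsLPFlow L f₁ f₂)
    (hL : ∀ t, 0 ≤ t → L t = L 0) :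
    IntegrableOn (flowIq L f₁ f₂ 0) (Set.Ioi 0) ∧
    (∫ t in Set.Ioi (0:ℝ), flowIq L f₁ f₂ 0 t) ≤
      (L 0) ^ 2 / 2 - 2 * π * flowArea L f₁ f₂ 0 := by
  have hπ : 2 * π ≠ 0 := by positivity
  refine integrableOn_Ioi_deriv_of_nonneg_of_le (g := fun t => 2 * π * flowArea L f₁ f₂ t)
    (continuousWithinAt_const.mul (h.1.continuousWithinAt_flowArea hL)) (fun t ht => ?_)
    (fun t ht => Iq_nonneg (h.1.2 t (le_of_lt ht)).1.le _ _ 0) (fun t ht => ?_)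
  · simpa [mul_div_cancel₀ _ hπ] using (h.hasDerivAt_flowArea hL ht).const_mul (2 * π)
  · have hA := h.1.flowArea_le (le_of_lt ht)
    rw [hL t (le_of_lt ht), le_div_iff₀ (by positivity)] at hA
    linarith
end
end
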